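/- Let U ⊆ ℝ³ be open, ρ₀ : U → ℂ a smooth function, ρ₁ a smooth complex 1-form and ρ₂ a smooth complex 2-form on U satisfying ρ₀ dρ₁ = dρ₀ ∧ ρ₁ and ρ₀ dρ₂ = dρ₀ ∧ ρ₂ on U. Let Z := ρ₀⁻¹(0) and assume that at every p ∈ Z one has dρ₀(p) ≠ 0 and Re(ρ₁ ∧ ρ̄₂)(p) ≠ 0. Then Z is a smooth 1-dimensional submanifold of U: for every p ∈ Z there are an open neighbourhood V ⊆ U of p, an open set W ⊆ ℝ³, and a C^∞ diffeomorphism Φ : V → W such that Φ(Z ∩ V) = W ∩ ({(0,0)} × ℝ). -/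

import Mathlib

noncomputable section

/-- A mixed-degree complex differential form on (an open subset of) `ℝⁿ`, described by its
coefficient functions with respect to the basis `dx_S = dx_{i₁} ∧ … ∧ dx_{i_k}`
(for `S = {i₁ < … < i_k} ⊆ {0,…,n-1}`). -/
abbrev MForm (n : ℕ) := (Fin n → ℝ) → Finset (Fin n) → ℂ

namespace MForm

variable {n : ℕ}

/-- The sign `ε(S,T)` with which `dx_S ∧ dx_T = ε(S,T) dx_{S ∪ T}` for disjoint `S`, `T`. -/
def mergeSign (S T : Finset (Fin n)) : ℂ :=
  (-1 : ℂ) ^ ((S ×ˢ T).filter fun p => p.2 < p.1).card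

/-- The wedge product of mixed-degree forms. -/
def wedge (α β : MForm n) : MForm n := fun x S =>
  ∑ T ∈ S.powerset, mergeSign T (S \ T) * α x T * β x (S \ T)

/-- The parity involution `τρ := ρ₊ − ρ₋`. -/
def tau (ρ : MForm n) : MForm n := fun x S => (-1 : ℂ) ^ S.card * ρ x S

/-- The even part `ρ₊` of a mixed-degree form. -/
def evenPart (ρ : MForm n) : MForm n := fun x S => if Even S.card then ρ x S else 0

/-- The odd part `ρ₋` of a mixed-degree form. -/
def oddPart (ρ : MForm n) : MForm n := fun x S => if Even S.card then 0 else ρ x S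

/-- The reversal anti-automorphism, `(α₁∧…∧α_r)⊤ = α_r∧…∧α₁`; on degree `k` it is
multiplication by `(-1)^(k(k-1)/2)`. -/
def rev (ρ : MForm n) : MForm n := fun x S => (-1 : ℂ) ^ (S.card * (S.card - 1) / 2) * ρ x S

/-- Complex conjugation of a form. -/
def conjF (ρ : MForm n) : MForm n := fun x S => (starRingEnd ℂ) (ρ x S)

/-- The exterior derivative: `(dρ)_S = Σ_{i∈S} (-1)^{#{j∈S : j<i}} ∂_i ρ_{S∖{i}}`, the
coordinate expression of `d`. -/
def extDer (ρ : MForm n) : MForm n := fun x S =>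
  ∑ i ∈ S, (-1 : ℂ) ^ (S.filter fun j => j < i).card *
    fderiv ℝ (fun y => ρ y (S.erase i)) x (Pi.single i 1)

/-- Contraction `ι_X ρ` with a (possibly complex) vector field `X`. -/
def contr (X : (Fin n → ℝ) → Fin n → ℂ) (ρ : MForm n) : MForm n := fun x S =>
  ∑ i ∈ Sᶜ, (-1 : ℂ) ^ (S.filter fun j => j < i).card * X x i * ρ x (insert i S)

/-- The Clifford action of `v = X + f + α` on spinors: `v·ρ := ι_X ρ + f τρ + α ∧ ρ`. -/
def cliffAct (X : (Fin n → ℝ) → Fin n → ℂ) (f : (Fin n → ℝ) → ℂ) (α : MForm n)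
    (ρ : MForm n) : MForm n :=
  fun x S => contr X ρ x S + f x * tau ρ x S + wedge α ρ x S

/-- A form is smooth on `U` when all of its coefficient functions are. -/
def SmoothOn (U : Set (Fin n → ℝ)) (ρ : MForm n) : Prop :=
  ∀ S, ContDiffOn ℝ (⊤ : ℕ∞) (fun x => ρ x S) U

/-- A form is homogeneous of degree `k` when only degree-`k` coefficients are nonzero. -/
def IsHomog (k : ℕ) (ρ : MForm n) : Prop := ∀ x S, S.card ≠ k → ρ x S = 0

/-- A form is real when all of its coefficients are real. -/
def IsReal (ρ : MForm n) : Prop := ∀ x S, (ρ x S).im = 0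

/-- Wedge powers `B^{∧k}`. -/
def wpow (B : MForm n) : ℕ → MForm n
  | 0 => fun _ S => if S = ∅ then 1 else 0
  | k + 1 => wedge B (wpow B k)

/-- `exp(B) = Σ_k B^{∧k}/k!`, a finite sum since `B^{∧k} = 0` for `k > n`. -/
def expW (B : MForm n) : MForm n :=
  ∑ k ∈ Finset.range (n + 1), ((k.factorial : ℂ))⁻¹ • wpow B k

/-- The A-field action `e^A ρ := ρ + A ∧ τρ` of a 1-form `A`. -/
def eA (A ρ : MForm n) : MForm n := ρ + wedge A (tau ρ)

/-- The B-field action `e^B ρ := exp(B) ∧ ρ` of a 2-form `B`. -/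
def eB (B ρ : MForm n) : MForm n := wedge (expW B) ρ

end MForm

open MForm

/-- A function `ρ₀ : U → ℂ` viewed as a (degree-0) mixed-degree form. -/
def zeroForm (ρ₀ : (Fin 3 → ℝ) → ℂ) : MForm 3 := fun x S => if S = ∅ then ρ₀ x else 0

open MForm Complex

namespace Aux

lemma sum_powU (f : Finset (Fin 3) → ℂ) :
    ∑ T ∈ (Finset.univ : Finset (Fin 3)).powerset, f T =
      f ∅ + f {0} + f {1} + f {2} + f {0,1} + f {0,2} + f {1,2} + f {0,1,2} := by
  rw [show (Finset.univ : Finset (Fin 3)).powerset =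
    {∅, {0}, {1}, {2}, {0,1}, {0,2}, {1,2}, {0,1,2}} from by decide]
  rw [Finset.sum_insert (by decide), Finset.sum_insert (by decide),
    Finset.sum_insert (by decide), Finset.sum_insert (by decide),
    Finset.sum_insert (by decide), Finset.sum_insert (by decide),
    Finset.sum_insert (by decide), Finset.sum_singleton]
  ring

lemma sum_pow01 (f : Finset (Fin 3) → ℂ) :
    ∑ T ∈ ({0,1} : Finset (Fin 3)).powerset, f T = f ∅ + f {0} + f {1} + f {0,1} := by
  rw [show ({0,1} : Finset (Fin 3)).powerset = {∅, {0}, {1}, {0,1}} from by decide]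
  rw [Finset.sum_insert (by decide), Finset.sum_insert (by decide),
    Finset.sum_insert (by decide), Finset.sum_singleton]
  ring

lemma sum_pow02 (f : Finset (Fin 3) → ℂ) :
    ∑ T ∈ ({0,2} : Finset (Fin 3)).powerset, f T = f ∅ + f {0} + f {2} + f {0,2} := by
  rw [show ({0,2} : Finset (Fin 3)).powerset = {∅, {0}, {2}, {0,2}} from by decide]
  rw [Finset.sum_insert (by decide), Finset.sum_insert (by decide),
    Finset.sum_insert (by decide), Finset.sum_singleton]
  ring

lemma sum_pow12 (f : Finset (Fin 3) → ℂ) :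
    ∑ T ∈ ({1,2} : Finset (Fin 3)).powerset, f T = f ∅ + f {1} + f {2} + f {1,2} := by
  rw [show ({1,2} : Finset (Fin 3)).powerset = {∅, {1}, {2}, {1,2}} from by decide]
  rw [Finset.sum_insert (by decide), Finset.sum_insert (by decide),
    Finset.sum_insert (by decide), Finset.sum_singleton]
  ring

lemma mergeSign_eval (S T : Finset (Fin 3)) (k : ℕ)
    (h : ((S ×ˢ T).filter fun p => p.2 < p.1).card = k) :
    mergeSign S T = (-1 : ℂ) ^ k := by rw [mergeSign, h]

lemma zeroForm_ne {ρ₀ : (Fin 3 → ℝ) → ℂ} {S : Finset (Fin 3)} (hS : S ≠ ∅) (y : Fin 3 → ℝ) :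
    zeroForm ρ₀ y S = 0 := by simp [zeroForm, hS]

lemma extDer_zeroForm_single (ρ₀ : (Fin 3 → ℝ) → ℂ) (x : Fin 3 → ℝ) (i : Fin 3) :
    extDer (zeroForm ρ₀) x {i} = fderiv ℝ ρ₀ x (Pi.single i 1) := by
  rw [extDer, Finset.sum_singleton]
  simp [zeroForm, Finset.erase_singleton, Finset.filter_singleton, mergeSign]

lemma extDer_zeroForm_of_card_ne {S : Finset (Fin 3)} (hS : S.card ≠ 1)
    (ρ₀ : (Fin 3 → ℝ) → ℂ) (x : Fin 3 → ℝ) :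
    extDer (zeroForm ρ₀) x S = 0 := by
  rw [extDer]
  apply Finset.sum_eq_zero
  intro i hi
  have h1 : 0 < S.card := Finset.card_pos.mpr ⟨i, hi⟩
  have h2 : 2 ≤ S.card := by omega
  have : S.erase i ≠ ∅ := by
    intro he
    have := Finset.card_erase_of_mem hi
    rw [he] at this
    simp at this
    omega
  have : (fun y => zeroForm ρ₀ y (S.erase i)) = fun _ => (0 : ℂ) := by
    funext y; exact zeroForm_ne this y
  rw [this]
  simp

end Aux

namespace Aux
open Complex

lemma prop3 {K : Type*} [Field K] {a b : Fin 3 → K}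
    (h : ∀ i j, a i * b j = a j * b i) {k : Fin 3} (hk : a k ≠ 0) (i : Fin 3) :
    b i = b k / a k * a i := by
  field_simp
  linear_combination h k i

lemma all_pairs {K : Type*} [CommRing K] {a b : Fin 3 → K}
    (h01 : a 0 * b 1 = a 1 * b 0) (h02 : a 0 * b 2 = a 2 * b 0)
    (h12 : a 1 * b 2 = a 2 * b 1) : ∀ i j, a i * b j = a j * b i
  | 0, 0 => by ring
  | 0, 1 => h01
  | 0, 2 => h02
  | 1, 0 => h01.symm
  | 1, 1 => by ring
  | 1, 2 => h12
  | 2, 0 => h02.symm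
  | 2, 1 => h12.symm
  | 2, 2 => by ring

/-- If the real and imaginary parts of a complex vector `a` are proportional (all 2×2 minors
vanish), then `conj a = μ • a` for some `μ ≠ 0`. -/
lemma exists_mu {a : Fin 3 → ℂ}
    (hdep : ∀ i j, (a i).re * (a j).im = (a j).re * (a i).im) :
    ∃ μ : ℂ, μ ≠ 0 ∧ ∀ i, (starRingEnd ℂ) (a i) = μ * a i := by
  set α : Fin 3 → ℝ := fun i => (a i).re with hα
  set β : Fin 3 → ℝ := fun i => (a i).im with hβ
  have ha : ∀ i, a i = (α i : ℂ) + (β i : ℝ) * I := fun i => (Complex.re_add_im (a i)).symm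
  by_cases hz : ∀ i, α i = 0
  · refine ⟨-1, by norm_num, fun i => ?_⟩
    rw [ha i, hz i]
    simp [Complex.ext_iff]
  · push_neg at hz
    obtain ⟨k, hk⟩ := hz
    have hprop : ∀ i, β i = β k / α k * α i := fun i =>
      prop3 (fun i j => hdep i j) hk i
    set t : ℝ := β k / α k with ht
    have h1 : (1 : ℂ) + (t : ℝ) * I ≠ 0 := by
      intro h
      have := congrArg Complex.re h
      simp at this
    refine ⟨((1 : ℂ) - (t : ℝ) * I) / ((1 : ℂ) + (t : ℝ) * I), ?_, fun i => ?_⟩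
    · apply div_ne_zero _ h1
      intro h
      have := congrArg Complex.re h
      simp at this
    · clear_value t
      rw [ha i, hprop i]
      rw [div_mul_eq_mul_div]
      refine (eq_div_iff h1).2 ?_
      simp only [map_add, map_mul, Complex.conj_ofReal, Complex.conj_I]
      push_cast
      ring

end Aux

namespace Aux

lemma cross_det_ne {α β : Fin 3 → ℝ}
    (h : ![α 1 * β 2 - α 2 * β 1, α 2 * β 0 - α 0 * β 2, α 0 * β 1 - α 1 * β 0]
      ≠ (0 : Fin 3 → ℝ)) :
    (Matrix.of ![α, β, ![α 1 * β 2 - α 2 * β 1, α 2 * β 0 - α 0 * β 2,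
      α 0 * β 1 - α 1 * β 0]]).det ≠ 0 := by
  have h3 : ¬ (α 1 * β 2 - α 2 * β 1 = 0 ∧ α 2 * β 0 - α 0 * β 2 = 0 ∧
      α 0 * β 1 - α 1 * β 0 = 0) := by
    rintro ⟨h0, h1, h2⟩
    apply h
    funext j
    fin_cases j <;> simpa
  have hdet : (Matrix.of ![α, β, ![α 1 * β 2 - α 2 * β 1, α 2 * β 0 - α 0 * β 2,
      α 0 * β 1 - α 1 * β 0]]).det
      = (α 1 * β 2 - α 2 * β 1) ^ 2 + (α 2 * β 0 - α 0 * β 2) ^ 2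
        + (α 0 * β 1 - α 1 * β 0) ^ 2 := by
    rw [Matrix.det_fin_three]
    simp only [Matrix.of_apply, Matrix.cons_val', Matrix.cons_val_zero, Matrix.cons_val_one,
      Matrix.head_cons, Matrix.cons_val_two, Matrix.tail_cons, Matrix.empty_val',
      Matrix.cons_val_fin_one, Matrix.head_fin_const]
    ring
  rw [hdet]
  intro h0
  exact h3 ⟨by nlinarith [sq_nonneg (α 1 * β 2 - α 2 * β 1), sq_nonneg (α 2 * β 0 - α 0 * β 2),
      sq_nonneg (α 0 * β 1 - α 1 * β 0)],
    by nlinarith [sq_nonneg (α 1 * β 2 - α 2 * β 1), sq_nonneg (α 2 * β 0 - α 0 * β 2),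
      sq_nonneg (α 0 * β 1 - α 1 * β 0)],
    by nlinarith [sq_nonneg (α 1 * β 2 - α 2 * β 1), sq_nonneg (α 2 * β 0 - α 0 * β 2),
      sq_nonneg (α 0 * β 1 - α 1 * β 0)]⟩

end Aux

namespace Aux

lemma one_le_inftop : (1 : WithTop ℕ∞) ≤ ((⊤ : ℕ∞) : WithTop ℕ∞) := by
  exact_mod_cast (le_top : (1 : ℕ∞) ≤ ⊤)

/-- General local diffeomorphism statement from the inverse function theorem. -/
lemma localDiffeo {g : (Fin 3 → ℝ) → (Fin 3 → ℝ)} {U : Set (Fin 3 → ℝ)} (hU : IsOpen U)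
    (hg : ContDiffOn ℝ (⊤ : ℕ∞) g U) {p : Fin 3 → ℝ} (hp : p ∈ U)
    (hdet : (fderiv ℝ g p).det ≠ 0) :
    ∃ (V W : Set (Fin 3 → ℝ)) (Ψ : (Fin 3 → ℝ) → (Fin 3 → ℝ)),
      IsOpen V ∧ p ∈ V ∧ V ⊆ U ∧ IsOpen W ∧
      ContDiffOn ℝ (⊤ : ℕ∞) Ψ W ∧ g '' V = W ∧
      (∀ x ∈ V, Ψ (g x) = x) ∧ (∀ y ∈ W, g (Ψ y) = y) := by
  -- the set where the derivative has nonzero determinant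
  have hfderiv_cont : ContinuousOn (fun x => fderiv ℝ g x) U :=
    hg.continuousOn_fderiv_of_isOpen hU one_le_inftop
  have hdetcont : ContinuousOn (fun x => (fderiv ℝ g x).det) U :=
    ContinuousLinearMap.continuous_det.comp_continuousOn hfderiv_cont
  set Ω : Set (Fin 3 → ℝ) := U ∩ (fun x => (fderiv ℝ g x).det) ⁻¹' {0}ᶜ with hΩ
  have hΩopen : IsOpen Ω := hdetcont.isOpen_inter_preimage hU isOpen_compl_singleton
  have hpΩ : p ∈ Ω := ⟨hp, by simpa using hdet⟩
  have hΩU : Ω ⊆ U := Set.inter_subset_left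
  -- differentiability on Ω
  have hdiff : ∀ x ∈ Ω, HasFDerivAt g (fderiv ℝ g x) x :=
    fun x hx => ((hg.contDiffAt (hU.mem_nhds (hΩU hx))).differentiableAt (by simp)).hasFDerivAt
  -- equivalences
  have hdetx : ∀ x ∈ Ω, (fderiv ℝ g x).det ≠ 0 := fun x hx => by simpa using hx.2
  set e : ∀ x ∈ Ω, (Fin 3 → ℝ) ≃L[ℝ] (Fin 3 → ℝ) :=
    fun x hx => (fderiv ℝ g x).toContinuousLinearEquivOfDetNeZero (hdetx x hx) with he
  have hDe : ∀ x (hx : x ∈ Ω), HasFDerivAt g ((e x hx : (Fin 3 → ℝ) →L[ℝ] (Fin 3 → ℝ))) x := by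
    intro x hx
    rw [he]
    simpa using hdiff x hx
  have hgat : ∀ x ∈ Ω, ContDiffAt ℝ (⊤ : ℕ∞) g x :=
    fun x hx => hg.contDiffAt (hU.mem_nhds (hΩU hx))
  set PH := (hgat p hpΩ).toOpenPartialHomeomorph g (hDe p hpΩ) (by simp) with hPH
  have hPHcoe : (PH : (Fin 3 → ℝ) → (Fin 3 → ℝ)) = g :=
    ContDiffAt.toOpenPartialHomeomorph_coe _ _ _
  have hpsrc : p ∈ PH.source := ContDiffAt.mem_toOpenPartialHomeomorph_source _ _ _
  set V := PH.source ∩ Ω with hV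
  have hVopen : IsOpen V := PH.open_source.inter hΩopen
  have hVsrc : V ⊆ PH.source := Set.inter_subset_left
  set W := PH '' V with hW
  have hWopen : IsOpen W := PH.isOpen_image_of_subset_source hVopen hVsrc
  refine ⟨V, W, PH.symm, hVopen, ⟨hpsrc, hpΩ⟩, fun x hx => hΩU hx.2, hWopen, ?_, ?_, ?_, ?_⟩
  · -- smoothness of the inverse on W
    intro y hy
    obtain ⟨x, hxV, rfl⟩ := hy
    have hxsrc := hVsrc hxV
    have h1 : PH.symm (PH x) = x := PH.left_inv hxsrc
    have h2 : PH x ∈ PH.target := PH.map_source hxsrc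
    have : ContDiffAt ℝ (⊤ : ℕ∞) PH.symm (PH x) := by
      apply PH.contDiffAt_symm h2 (f₀' := e x hxV.2)
      · rw [h1, hPHcoe]; exact hDe x hxV.2
      · rw [h1, hPHcoe]; exact hgat x hxV.2
    exact this.contDiffWithinAt
  · rw [← hPHcoe]
  · intro x hx
    rw [← hPHcoe]; exact PH.left_inv (hVsrc hx)
  · intro y hy
    obtain ⟨x, hxV, rfl⟩ := hy
    rw [← hPHcoe]
    exact PH.right_inv (PH.map_source (hVsrc hxV))

end Aux


open Aux Complex

/-- let `ρ₀` be a smooth complex function, `ρ₁` a smooth complex 1-form and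
`ρ₂` a smooth complex 2-form on an open `U ⊆ ℝ³` with `ρ₀ dρ₁ = dρ₀ ∧ ρ₁` and
`ρ₀ dρ₂ = dρ₀ ∧ ρ₂`.  If at every `p` in `Z = ρ₀⁻¹(0)` one has `dρ₀(p) ≠ 0` and
`Re(ρ₁ ∧ ρ̄₂)(p) ≠ 0`, then `Z` is a smooth 1-dimensional submanifold of `U`: every
`p ∈ Z` has an open neighbourhood `V ⊆ U` and a `C^∞` diffeomorphism `Φ : V → W` onto an
open `W ⊆ ℝ³` with `Φ(Z ∩ V) = W ∩ ({(0,0)} × ℝ)`. -/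
theorem typeChange_locus_submanifold (U : Set (Fin 3 → ℝ)) (hU : IsOpen U)
    (ρ₀ : (Fin 3 → ℝ) → ℂ) (ρ₁ ρ₂ : MForm 3)
    (hρ₀ : ContDiffOn ℝ (⊤ : ℕ∞) ρ₀ U)
    (hρ₁ : MForm.SmoothOn U ρ₁) (hρ₂ : MForm.SmoothOn U ρ₂)
    (hρ₁1 : MForm.IsHomog 1 ρ₁) (hρ₂2 : MForm.IsHomog 2 ρ₂)
    (hc : ∀ x ∈ U, ∀ S, ρ₀ x * extDer ρ₁ x S = wedge (extDer (zeroForm ρ₀)) ρ₁ x S)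
    (hd : ∀ x ∈ U, ∀ S, ρ₀ x * extDer ρ₂ x S = wedge (extDer (zeroForm ρ₀)) ρ₂ x S)
    (Z : Set (Fin 3 → ℝ)) (hZ : Z = {x ∈ U | ρ₀ x = 0})
    (hreg : ∀ p ∈ Z, fderiv ℝ ρ₀ p ≠ 0)
    (hnd : ∀ p ∈ Z, ((wedge ρ₁ (conjF ρ₂)) p Finset.univ).re ≠ 0) :
    ∀ p ∈ Z, ∃ (V W : Set (Fin 3 → ℝ)) (Φ Ψ : (Fin 3 → ℝ) → (Fin 3 → ℝ)),
      IsOpen V ∧ p ∈ V ∧ V ⊆ U ∧ IsOpen W ∧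
      ContDiffOn ℝ (⊤ : ℕ∞) Φ V ∧ ContDiffOn ℝ (⊤ : ℕ∞) Ψ W ∧
      Φ '' V = W ∧ (∀ x ∈ V, Ψ (Φ x) = x) ∧ (∀ y ∈ W, Φ (Ψ y) = y) ∧
      Φ '' (Z ∩ V) = W ∩ {y | y 0 = 0 ∧ y 1 = 0} := by
  intro p hpZ
  have hpU : p ∈ U := by rw [hZ] at hpZ; exact hpZ.1
  have hp0 : ρ₀ p = 0 := by rw [hZ] at hpZ; exact hpZ.2
  -- notation
  set φ : (Fin 3 → ℝ) →L[ℝ] ℂ := fderiv ℝ ρ₀ p with hφdef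
  set a : Fin 3 → ℂ := fun i => φ (Pi.single i 1) with hadef
  set b : Fin 3 → ℂ := fun i => ρ₁ p {i} with hbdef
  have happ : ∀ v, φ v = ∑ i, v i • a i := by
    intro v
    have hv : v = ∑ i, v i • (Pi.single i 1 : Fin 3 → ℝ) := by
      funext k
      simp [Finset.sum_apply, Pi.single_apply]
    conv_lhs => rw [hv]
    simp [hadef]
  -- values of dρ₀ as a form
  have hAi : ∀ i, extDer (zeroForm ρ₀) p {i} = a i := fun i =>
    extDer_zeroForm_single ρ₀ p i
  have hA : ∀ S : Finset (Fin 3), S.card ≠ 1 → extDer (zeroForm ρ₀) p S = 0 :=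
    fun S hS => extDer_zeroForm_of_card_ne hS ρ₀ p
  -- E1 : the three pair relations
  have e01 : a 0 * b 1 = a 1 * b 0 := by
    have h := (hc p hpU {0,1}).symm
    rw [hp0, zero_mul] at h
    rw [wedge] at h
    rw [sum_pow01] at h
    simp only [show ({0,1} : Finset (Fin 3)) \ ∅ = {0,1} from by decide,
      show ({0,1} : Finset (Fin 3)) \ {0} = {1} from by decide,
      show ({0,1} : Finset (Fin 3)) \ {1} = {0} from by decide,
      show ({0,1} : Finset (Fin 3)) \ {0,1} = ∅ from by decide,
      hA ∅ (by decide), hA {0,1} (by decide), hAi,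
      mergeSign_eval {0} {1} 0 (by decide), mergeSign_eval {1} {0} 1 (by decide)] at h
    simp only [hbdef]
    linear_combination h
  have e02 : a 0 * b 2 = a 2 * b 0 := by
    have h := (hc p hpU {0,2}).symm
    rw [hp0, zero_mul] at h
    rw [wedge] at h
    rw [sum_pow02] at h
    simp only [show ({0,2} : Finset (Fin 3)) \ ∅ = {0,2} from by decide,
      show ({0,2} : Finset (Fin 3)) \ {0} = {2} from by decide,
      show ({0,2} : Finset (Fin 3)) \ {2} = {0} from by decide,
      show ({0,2} : Finset (Fin 3)) \ {0,2} = ∅ from by decide,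
      hA ∅ (by decide), hA {0,2} (by decide), hAi,
      mergeSign_eval {0} {2} 0 (by decide), mergeSign_eval {2} {0} 1 (by decide)] at h
    simp only [hbdef]
    linear_combination h
  have e12 : a 1 * b 2 = a 2 * b 1 := by
    have h := (hc p hpU {1,2}).symm
    rw [hp0, zero_mul] at h
    rw [wedge] at h
    rw [sum_pow12] at h
    simp only [show ({1,2} : Finset (Fin 3)) \ ∅ = {1,2} from by decide,
      show ({1,2} : Finset (Fin 3)) \ {1} = {2} from by decide,
      show ({1,2} : Finset (Fin 3)) \ {2} = {1} from by decide,
      show ({1,2} : Finset (Fin 3)) \ {1,2} = ∅ from by decide,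
      hA ∅ (by decide), hA {1,2} (by decide), hAi,
      mergeSign_eval {1} {2} 0 (by decide), mergeSign_eval {2} {1} 1 (by decide)] at h
    simp only [hbdef]
    linear_combination h
  -- E2 : dρ₀ ∧ ρ₂ = 0 at p, top degree
  have E2 : a 0 * ρ₂ p {1,2} - a 1 * ρ₂ p {0,2} + a 2 * ρ₂ p {0,1} = 0 := by
    have h := (hd p hpU Finset.univ).symm
    rw [hp0, zero_mul] at h
    rw [wedge] at h
    rw [sum_powU] at h
    simp only [show (Finset.univ : Finset (Fin 3)) \ ∅ = Finset.univ from by decide,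
      show (Finset.univ : Finset (Fin 3)) \ {0} = {1,2} from by decide,
      show (Finset.univ : Finset (Fin 3)) \ {1} = {0,2} from by decide,
      show (Finset.univ : Finset (Fin 3)) \ {2} = {0,1} from by decide,
      show (Finset.univ : Finset (Fin 3)) \ {0,1} = {2} from by decide,
      show (Finset.univ : Finset (Fin 3)) \ {0,2} = {1} from by decide,
      show (Finset.univ : Finset (Fin 3)) \ {1,2} = {0} from by decide,
      show (Finset.univ : Finset (Fin 3)) \ {0,1,2} = ∅ from by decide,
      hA ∅ (by decide), hA {0,1} (by decide), hA {0,2} (by decide), hA {1,2} (by decide),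
      hA {0,1,2} (by decide), hAi,
      mergeSign_eval {0} {1,2} 0 (by decide), mergeSign_eval {1} {0,2} 1 (by decide),
      mergeSign_eval {2} {0,1} 2 (by decide)] at h
    linear_combination h
  -- E3 : the nondegeneracy data at p
  have hval : wedge ρ₁ (conjF ρ₂) p Finset.univ =
      b 0 * (starRingEnd ℂ) (ρ₂ p {1,2}) - b 1 * (starRingEnd ℂ) (ρ₂ p {0,2})
        + b 2 * (starRingEnd ℂ) (ρ₂ p {0,1}) := by
    rw [wedge]
    rw [sum_powU]
    simp only [show (Finset.univ : Finset (Fin 3)) \ ∅ = Finset.univ from by decide,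
      show (Finset.univ : Finset (Fin 3)) \ {0} = {1,2} from by decide,
      show (Finset.univ : Finset (Fin 3)) \ {1} = {0,2} from by decide,
      show (Finset.univ : Finset (Fin 3)) \ {2} = {0,1} from by decide,
      show (Finset.univ : Finset (Fin 3)) \ {0,1} = {2} from by decide,
      show (Finset.univ : Finset (Fin 3)) \ {0,2} = {1} from by decide,
      show (Finset.univ : Finset (Fin 3)) \ {1,2} = {0} from by decide,
      show (Finset.univ : Finset (Fin 3)) \ {0,1,2} = ∅ from by decide,
      hρ₁1 p ∅ (by decide), hρ₁1 p {0,1} (by decide), hρ₁1 p {0,2} (by decide),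
      hρ₁1 p {1,2} (by decide), hρ₁1 p {0,1,2} (by decide), conjF,
      mergeSign_eval {0} {1,2} 0 (by decide), mergeSign_eval {1} {0,2} 1 (by decide),
      mergeSign_eval {2} {0,1} 2 (by decide)]
    simp only [hbdef]
    ring
  have hQne : b 0 * (starRingEnd ℂ) (ρ₂ p {1,2}) - b 1 * (starRingEnd ℂ) (ρ₂ p {0,2})
      + b 2 * (starRingEnd ℂ) (ρ₂ p {0,1}) ≠ 0 := by
    intro h
    exact hnd p hpZ (by rw [hval, h]; simp)
  -- a is nonzero
  have hksome : ∃ k, a k ≠ 0 := by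
    by_contra h
    push_neg at h
    apply hreg p hpZ
    rw [← hφdef]
    ext v
    rw [ContinuousLinearMap.zero_apply, happ v]
    simp [h]
  obtain ⟨k, hk⟩ := hksome
  have hball : ∀ i j, a i * b j = a j * b i := all_pairs e01 e02 e12
  set c : ℂ := b k / a k with hcdef
  have hb : ∀ i, b i = c * a i := fun i => prop3 hball hk i
  -- P' ≠ 0
  set P' : ℂ := a 0 * (starRingEnd ℂ) (ρ₂ p {1,2}) - a 1 * (starRingEnd ℂ) (ρ₂ p {0,2})
      + a 2 * (starRingEnd ℂ) (ρ₂ p {0,1}) with hP'def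
  have hP' : P' ≠ 0 := by
    intro h
    apply hQne
    rw [hb 0, hb 1, hb 2]
    linear_combination c * h
  -- the real cross product is nonzero
  set α : Fin 3 → ℝ := fun i => (a i).re with hαdef
  set β : Fin 3 → ℝ := fun i => (a i).im with hβdef
  set w : Fin 3 → ℝ := ![α 1 * β 2 - α 2 * β 1, α 2 * β 0 - α 0 * β 2,
    α 0 * β 1 - α 1 * β 0] with hwdef
  have hwne : w ≠ 0 := by
    intro hw0
    have h12 : α 1 * β 2 = α 2 * β 1 := by
      have := congrFun hw0 0
      rw [hwdef] at this
      simpa [sub_eq_zero] using this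
    have h02 : α 0 * β 2 = α 2 * β 0 := by
      have := congrFun hw0 1
      rw [hwdef] at this
      simp only [Matrix.cons_val_one, Matrix.head_cons, Pi.zero_apply] at this
      linarith [sub_eq_zero.mp this]
    have h01 : α 0 * β 1 = α 1 * β 0 := by
      have := congrFun hw0 2
      rw [hwdef] at this
      simp only [Matrix.cons_val_two, Matrix.tail_cons, Matrix.head_cons,
        Pi.zero_apply] at this
      linarith [sub_eq_zero.mp this]
    obtain ⟨μ, hμ, hconj⟩ := exists_mu (a := a) (all_pairs h01 h02 h12)
    have hcE2 := congrArg (starRingEnd ℂ) E2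
    simp only [map_sub, map_add, map_mul, map_zero, hconj] at hcE2
    exact mul_ne_zero hμ hP' (by rw [hP'def]; linear_combination hcE2)
  -- the matrix and its determinant
  set M : Matrix (Fin 3) (Fin 3) ℝ := Matrix.of ![α, β, w] with hMdef
  have hdetMne : M.det ≠ 0 := by
    rw [hMdef, hwdef]
    exact cross_det_ne (by rw [hwdef] at hwne; exact hwne)
  -- the straightening map
  set D : (Fin 3 → ℝ) →L[ℝ] (Fin 3 → ℝ) := LinearMap.toContinuousLinearMap M.mulVecLin
    with hDdef
  set g : (Fin 3 → ℝ) → (Fin 3 → ℝ) :=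
    fun x => ![(ρ₀ x).re, (ρ₀ x).im, ∑ j, w j * x j] with hgdef
  have hg0 : ∀ x, g x 0 = (ρ₀ x).re := fun x => rfl
  have hg1 : ∀ x, g x 1 = (ρ₀ x).im := fun x => rfl
  have hg2 : ∀ x, g x 2 = ∑ j, w j * x j := fun x => rfl
  have hDapp : ∀ (v : Fin 3 → ℝ) i, D v i = ∑ j, M i j * v j := by
    intro v i
    rw [hDdef]
    simp [Matrix.mulVecLin_apply, Matrix.mulVec, dotProduct]
  -- smoothness of g
  have hgU : ContDiffOn ℝ (⊤ : ℕ∞) g U := by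
    apply contDiffOn_pi.2
    intro i
    have hcd2 : ContDiffOn ℝ ((⊤ : ℕ∞) : WithTop ℕ∞) (fun x : Fin 3 → ℝ => ∑ j, w j * x j) U :=
      ContDiff.contDiffOn (ContDiff.sum fun j _ => contDiff_const.mul
        ((ContinuousLinearMap.proj j : (Fin 3 → ℝ) →L[ℝ] ℝ).contDiff))
    fin_cases i
    · exact Complex.reCLM.contDiff.comp_contDiffOn hρ₀
    · exact Complex.imCLM.contDiff.comp_contDiffOn hρ₀
    · exact hcd2
  -- the derivative of g at p
  have hφp : HasFDerivAt ρ₀ φ p :=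
    ((hρ₀.contDiffAt (hU.mem_nhds hpU)).differentiableAt (by simp)).hasFDerivAt
  have hDg : HasFDerivAt g D p := by
    apply hasFDerivAt_pi''
    intro i
    fin_cases i
    · have h0 : HasFDerivAt (fun x => (ρ₀ x).re) (Complex.reCLM.comp φ) p :=
        (Complex.reCLM.hasFDerivAt).comp p hφp
      have heq : Complex.reCLM.comp φ = (ContinuousLinearMap.proj 0).comp D := by
        ext v
        simp only [ContinuousLinearMap.coe_comp', Function.comp_apply,
          ContinuousLinearMap.proj_apply, Complex.reCLM_apply]
        rw [happ v, hDapp v 0]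
        rw [Fin.sum_univ_three, Fin.sum_univ_three]
        simp only [Complex.add_re, Complex.real_smul, Complex.mul_re, Complex.ofReal_re,
          Complex.ofReal_im, hMdef, Matrix.of_apply, Matrix.cons_val', Matrix.cons_val_zero,
          Matrix.empty_val', Matrix.cons_val_fin_one, Matrix.cons_val_one, Matrix.head_cons,
          Matrix.cons_val_two, Matrix.tail_cons, hαdef]
        ring
      exact heq ▸ h0
    · have h0 : HasFDerivAt (fun x => (ρ₀ x).im) (Complex.imCLM.comp φ) p :=
        (Complex.imCLM.hasFDerivAt).comp p hφp
      have heq : Complex.imCLM.comp φ = (ContinuousLinearMap.proj 1).comp D := by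
        ext v
        simp only [ContinuousLinearMap.coe_comp', Function.comp_apply,
          ContinuousLinearMap.proj_apply, Complex.imCLM_apply]
        rw [happ v, hDapp v 1]
        rw [Fin.sum_univ_three, Fin.sum_univ_three]
        simp only [Complex.add_im, Complex.real_smul, Complex.mul_im, Complex.ofReal_re,
          Complex.ofReal_im, hMdef, Matrix.of_apply, Matrix.cons_val', Matrix.cons_val_zero,
          Matrix.empty_val', Matrix.cons_val_fin_one, Matrix.cons_val_one, Matrix.head_cons,
          Matrix.cons_val_two, Matrix.tail_cons, hβdef]
        ring
      exact heq ▸ h0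
    · have heq : (fun x : Fin 3 → ℝ => ∑ j, w j * x j)
          = ⇑((ContinuousLinearMap.proj (2 : Fin 3)).comp D) := by
        funext v
        simp only [ContinuousLinearMap.coe_comp', Function.comp_apply,
          ContinuousLinearMap.proj_apply]
        rw [hDapp v 2]
        rw [Fin.sum_univ_three, Fin.sum_univ_three]
        simp only [hMdef, Matrix.of_apply, Matrix.cons_val', Matrix.cons_val_zero,
          Matrix.empty_val', Matrix.cons_val_fin_one, Matrix.cons_val_one, Matrix.head_cons,
          Matrix.cons_val_two, Matrix.tail_cons, Matrix.vecHead]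
        try ring
      have h2p : HasFDerivAt (fun x : Fin 3 → ℝ => ∑ j, w j * x j)
          ((ContinuousLinearMap.proj (2 : Fin 3)).comp D) p := by
        rw [heq]
        exact ContinuousLinearMap.hasFDerivAt _
      exact h2p
  -- nonzero determinant of the derivative
  have hdetD : (fderiv ℝ g p).det ≠ 0 := by
    rw [hDg.fderiv]
    have hDdet : D.det = M.det := by
      rw [hDdef]
      show LinearMap.det ((LinearMap.toContinuousLinearMap M.mulVecLin :
        (Fin 3 → ℝ) →L[ℝ] (Fin 3 → ℝ)) : (Fin 3 → ℝ) →ₗ[ℝ] (Fin 3 → ℝ)) = M.det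
      rw [LinearMap.coe_toContinuousLinearMap, ← Matrix.toLin'_apply', LinearMap.det_toLin']
    rw [hDdet]
    exact hdetMne
  -- apply the inverse function theorem
  obtain ⟨V, W, Ψ, hVopen, hpV, hVU, hWopen, hΨ, himg, hleft, hright⟩ :=
    localDiffeo hU hgU hpU hdetD
  refine ⟨V, W, g, Ψ, hVopen, hpV, hVU, hWopen, hgU.mono hVU, hΨ, himg, hleft, hright, ?_⟩
  -- the straightening property
  apply Set.Subset.antisymm
  · rintro _ ⟨x, ⟨hxZ, hxV⟩, rfl⟩
    have hx0 : ρ₀ x = 0 := by rw [hZ] at hxZ; exact hxZ.2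
    refine ⟨himg ▸ ⟨x, hxV, rfl⟩, ?_, ?_⟩
    · rw [hg0 x, hx0]; simp
    · rw [hg1 x, hx0]; simp
  · rintro y ⟨hyW, hy0, hy1⟩
    rw [← himg] at hyW
    obtain ⟨x, hxV, rfl⟩ := hyW
    have hx0 : ρ₀ x = 0 := by
      apply Complex.ext
      · rw [show (ρ₀ x).re = g x 0 from (hg0 x).symm, hy0]; simp
      · rw [show (ρ₀ x).im = g x 1 from (hg1 x).symm, hy1]; simp
    exact ⟨x, ⟨by rw [hZ]; exact ⟨hVU hxV, hx0⟩, hxV⟩, rfl⟩
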